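/- arXiv:2407.20918 — 2 statements merged into one kernel-verified Lean document; each statement's English description precedes it below -/
import Mathlib

section
/- Consider the epistemic space E¹ = ⟨𝓔₁, mod⟩ and define the belief change operator ÷ for E¹ by: Ψ ÷ A = Ψ_⊤ if mod(Ψ) ⊆ A and A ≠ Ω₁, and Ψ ÷ A = Ψ otherwise. Then ÷ is a linear contraction operator for E¹, witnessed by the linear order ≪ on Ω₁ with ω₁ ≪ ω₂. -/
/-!
In `E¹`, contracting a believed `A ≠ Ω₁` moves to `Ψ_⊤`, which adds exactly the one
countermodel of `A`; that countermodel is also its `≤`-least one, so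
`mod (Ψ ÷ A) = mod Ψ ∪ min(Aᶜ, ≤)`. Any operator of this shape built from a linear order on a
finite set satisfies C1–C7: (C3) because a nonempty finite set has a least element, (C6) because
a least element of `Aᶜ ∪ Bᶜ` is least in `Aᶜ` or in `Bᶜ`, and (C7) because a least element of
`Aᶜ ∪ Bᶜ` lying in `Bᶜ` makes every least element of `Bᶜ` least in `Aᶜ ∪ Bᶜ`.
-/

open Set

/-- `minSet r S` is the set of `r`-minimal elements of `S`:
`min(S, r) = {ω ∈ S : r ω ω' for all ω' ∈ S}`. -/
def minSet {Ω : Type*} (r : Ω → Ω → Prop) (S : Set Ω) : Set Ω :=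
  {ω ∈ S | ∀ ω' ∈ S, r ω ω'}

/-- A linear order as a relation: total, antisymmetric and transitive. -/
def IsLinRel {Ω : Type*} (r : Ω → Ω → Prop) : Prop :=
  (∀ a b, r a b ∨ r b a) ∧ (∀ a b, r a b → r b a → a = b) ∧
    (∀ a b c, r a b → r b c → r a c)

/-- AGM contraction operator for the epistemic space `⟨E, md⟩` (postulates C1–C7,
formulated on model sets). -/
def IsContraction {Ω E : Type*} (md : E → Set Ω) (c : E → Set Ω → E) : Prop :=
  ∀ (Ψ : E) (A B : Set Ω),
    md Ψ ⊆ md (c Ψ A) ∧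
    (¬ md Ψ ⊆ A → md (c Ψ A) ⊆ md Ψ) ∧
    (A ≠ Set.univ → ¬ md (c Ψ A) ⊆ A) ∧
    md (c Ψ A) ∩ A ⊆ md Ψ ∧
    md (c Ψ (A ∩ B)) ⊆ md (c Ψ A) ∪ md (c Ψ B) ∧
    (¬ md (c Ψ (A ∩ B)) ⊆ B → md (c Ψ B) ⊆ md (c Ψ (A ∩ B)))

/-- AGM revision operator for the epistemic space `⟨E, md⟩` (postulates R1–R6,
formulated on model sets). -/
def IsRevision {Ω E : Type*} (md : E → Set Ω) (s : E → Set Ω → E) : Prop :=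
  ∀ (Ψ : E) (A B : Set Ω),
    md (s Ψ A) ⊆ A ∧
    (md Ψ ∩ A ≠ ∅ → md (s Ψ A) = md Ψ ∩ A) ∧
    (A ≠ ∅ → md (s Ψ A) ≠ ∅) ∧
    md (s Ψ A) ∩ B ⊆ md (s Ψ (A ∩ B)) ∧
    (md (s Ψ A) ∩ B ≠ ∅ → md (s Ψ (A ∩ B)) ⊆ md (s Ψ A) ∩ B)

/-- Postulate (ZC). -/
def ZC {Ω E : Type*} (md : E → Set Ω) : Prop :=
  ∀ (Ψ : E) (M : Set Ω), md Ψ ⊆ M → ∃ Ψ' : E, md Ψ' = M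

/-- Postulate (ZR1). -/
def ZR1 {Ω E : Type*} (md : E → Set Ω) : Prop :=
  ∀ ω : Ω, ∃ Ψ : E, md Ψ = {ω}

/-- Postulate (ZR2). -/
def ZR2 {Ω E : Type*} (md : E → Set Ω) : Prop :=
  ∀ (Ψ : E) (M : Set Ω), M ⊆ md Ψ → ∃ Ψ' : E, md Ψ' = M

/-- Postulate (Unbiased). -/
def Unbiased {Ω E : Type*} (md : E → Set Ω) : Prop :=
  ∀ M : Set Ω, ∃ Ψ : E, md Ψ = M

/-- Maxichoice contraction operator. -/
def IsMaxichoiceContraction {Ω E : Type*} (md : E → Set Ω) (c : E → Set Ω → E) : Prop :=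
  IsContraction md c ∧
    ∀ Ψ : E, ∃ r : Ω → Ω → Prop, IsLinRel r ∧ ∀ A : Set Ω,
      (¬ md Ψ ⊆ A → md (c Ψ A) = md Ψ) ∧
      (md Ψ ⊆ A → md (c Ψ A) = md Ψ ∪ minSet r Aᶜ)

/-- Linear contraction operator: a maxichoice contraction operator based on one
single linear order for all epistemic states. -/
def IsLinearContraction {Ω E : Type*} (md : E → Set Ω) (c : E → Set Ω → E) : Prop :=
  IsContraction md c ∧
    ∃ r : Ω → Ω → Prop, IsLinRel r ∧ ∀ (Ψ : E) (A : Set Ω),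
      (¬ md Ψ ⊆ A → md (c Ψ A) = md Ψ) ∧
      (md Ψ ⊆ A → md (c Ψ A) = md Ψ ∪ minSet r Aᶜ)

/-- Full meet contraction operator. -/
def IsFullMeetContraction {Ω E : Type*} (md : E → Set Ω) (c : E → Set Ω → E) : Prop :=
  IsContraction md c ∧
    ∀ (Ψ : E) (A : Set Ω),
      (¬ md Ψ ⊆ A → md (c Ψ A) = md Ψ) ∧
      (md Ψ ⊆ A → md (c Ψ A) = md Ψ ∪ Aᶜ)

/-- Maxichoice revision operator. -/
def IsMaxichoiceRevision {Ω E : Type*} (md : E → Set Ω) (s : E → Set Ω → E) : Prop :=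
  IsRevision md s ∧
    ∀ Ψ : E, ∃ r : Ω → Ω → Prop, IsLinRel r ∧ ∀ A : Set Ω,
      (md Ψ ∩ A ≠ ∅ → md (s Ψ A) = md Ψ ∩ A) ∧
      (md Ψ ∩ A = ∅ → md (s Ψ A) = minSet r A)

/-- Linear revision operator: a maxichoice revision operator based on one single
linear order for all epistemic states. -/
def IsLinearRevision {Ω E : Type*} (md : E → Set Ω) (s : E → Set Ω → E) : Prop :=
  IsRevision md s ∧
    ∃ r : Ω → Ω → Prop, IsLinRel r ∧ ∀ (Ψ : E) (A : Set Ω),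
      (md Ψ ∩ A ≠ ∅ → md (s Ψ A) = md Ψ ∩ A) ∧
      (md Ψ ∩ A = ∅ → md (s Ψ A) = minSet r A)

/-- Full meet revision operator. -/
def IsFullMeetRevision {Ω E : Type*} (md : E → Set Ω) (s : E → Set Ω → E) : Prop :=
  IsRevision md s ∧
    ∀ (Ψ : E) (A : Set Ω),
      (md Ψ ∩ A ≠ ∅ → md (s Ψ A) = md Ψ ∩ A) ∧
      (md Ψ ∩ A = ∅ → md (s Ψ A) = A)


/-- The epistemic space `E¹` over `Ω₁ = Fin 2` (worlds `ω₁, ω₂`): three states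
`Ψ₁, Ψ₂, Ψ_⊤` with `mod Ψ₁ = {ω₁}`, `mod Ψ₂ = {ω₂}` and `mod Ψ_⊤ = Ω₁`. -/
def md1 : Fin 3 → Set (Fin 2) := ![{0}, {1}, Set.univ]

open Classical in
/-- The belief change operator `÷` for `E¹`: `Ψ ÷ A = Ψ_⊤` if `mod Ψ ⊆ A` and
`A ≠ Ω₁`, and `Ψ ÷ A = Ψ` otherwise. -/
noncomputable def div1 : Fin 3 → Set (Fin 2) → Fin 3 :=
  fun Ψ A => if md1 Ψ ⊆ A ∧ A ≠ Set.univ then 2 else Ψ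

section minSet

variable {Ω : Type*} {r : Ω → Ω → Prop}

theorem minSet_subset (S : Set Ω) : minSet r S ⊆ S :=
  sep_subset _ _

theorem minSet_nonempty (htot : ∀ a b, r a b ∨ r b a) (htrans : ∀ a b c, r a b → r b c → r a c)
    {S : Set Ω} (hS : S.Finite) (hne : S.Nonempty) : (minSet r S).Nonempty := by
  induction S, hS using Set.Finite.induction_on with
  | empty => exact absurd hne Set.not_nonempty_empty
  | @insert a s _ _ ih =>
    rcases s.eq_empty_or_nonempty with rfl | hs
    · exact ⟨a, mem_insert a _, forall_mem_insert.mpr ⟨(htot a a).elim id id, by simp⟩⟩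
    obtain ⟨m, hms, hm⟩ := ih hs
    rcases htot a m with ham | hma
    · exact ⟨a, mem_insert a s, forall_mem_insert.mpr
        ⟨(htot a a).elim id id, fun b hb => htrans a m b ham (hm b hb)⟩⟩
    · exact ⟨m, mem_insert_of_mem a hms, forall_mem_insert.mpr ⟨hma, hm⟩⟩

theorem minSet_union_subset (S T : Set Ω) : minSet r (S ∪ T) ⊆ minSet r S ∪ minSet r T := by
  rintro ω ⟨hS | hT, hmin⟩
  · exact Or.inl ⟨hS, fun ω' h => hmin ω' (Or.inl h)⟩
  · exact Or.inr ⟨hT, fun ω' h => hmin ω' (Or.inr h)⟩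

theorem minSet_subset_minSet_union (htrans : ∀ a b c, r a b → r b c → r a c) {S T : Set Ω}
    (h : (minSet r (S ∪ T) ∩ T).Nonempty) : minSet r T ⊆ minSet r (S ∪ T) := by
  obtain ⟨ω, ⟨-, hω⟩, hωT⟩ := h
  exact fun m ⟨hmT, hm⟩ => ⟨Or.inr hmT, fun ω' h' => htrans m ω ω' (hm ω hωT) (hω ω' h')⟩

end minSet

theorem isLinRel_le {α : Type*} [LinearOrder α] : IsLinRel (fun x y : α => x ≤ y) :=
  ⟨le_total, fun _ _ => le_antisymm, fun _ _ _ => le_trans⟩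

theorem isContraction_of_eq_union_minSet {Ω E : Type*} [Finite Ω] {md : E → Set Ω}
    {c : E → Set Ω → E} {r : Ω → Ω → Prop} (hr : IsLinRel r)
    (hc : ∀ Ψ A, (¬ md Ψ ⊆ A → md (c Ψ A) = md Ψ) ∧
      (md Ψ ⊆ A → md (c Ψ A) = md Ψ ∪ minSet r Aᶜ)) :
    IsContraction md c := by
  obtain ⟨htot, -, htrans⟩ := hr
  have hmono (Ψ A) : md Ψ ⊆ md (c Ψ A) := by
    by_cases h : md Ψ ⊆ A
    · exact ((hc Ψ A).2 h).symm ▸ subset_union_left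
    · exact ((hc Ψ A).1 h).ge
  intro Ψ A B
  refine ⟨hmono Ψ A, fun h => ((hc Ψ A).1 h).le, fun hA hsub => ?_, ?_, ?_, fun hB => ?_⟩
  · by_cases h : md Ψ ⊆ A
    · obtain ⟨ω, hω⟩ := minSet_nonempty htot htrans (toFinite Aᶜ) (nonempty_compl.mpr hA)
      exact minSet_subset _ hω (hsub (((hc Ψ A).2 h).symm ▸ Or.inr hω))
    · exact h (((hc Ψ A).1 h) ▸ hsub)
  · by_cases h : md Ψ ⊆ A
    · rw [(hc Ψ A).2 h, union_inter_distrib_right]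
      exact union_subset inter_subset_left fun ω hω => absurd hω.2 (minSet_subset _ hω.1)
    · exact ((hc Ψ A).1 h).le.trans' inter_subset_left
  · by_cases h : md Ψ ⊆ A ∩ B
    · rw [(hc Ψ _).2 h, (hc Ψ A).2 (h.trans inter_subset_left),
        (hc Ψ B).2 (h.trans inter_subset_right), compl_inter]
      exact union_subset (subset_union_left.trans subset_union_left)
        ((minSet_union_subset _ _).trans (union_subset_union subset_union_right subset_union_right))
    · exact ((hc Ψ _).1 h).le.trans (subset_union_left.trans' (hmono Ψ A))
  · by_cases h : md Ψ ⊆ A ∩ B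
    · rw [(hc Ψ _).2 h, compl_inter] at hB ⊢
      rw [(hc Ψ B).2 (h.trans inter_subset_right)]
      obtain ⟨ω, hω, hωB⟩ := not_subset.mp hB
      have hωmin : ω ∈ minSet r (Aᶜ ∪ Bᶜ) :=
        hω.resolve_left fun h' => hωB (h.trans inter_subset_right h')
      exact union_subset_union_right _ (minSet_subset_minSet_union htrans ⟨ω, hωmin, hωB⟩)
    · by_cases hΨB : md Ψ ⊆ B
      · exact absurd (((hc Ψ _).1 h).symm ▸ hΨB) hB
      · rw [(hc Ψ B).1 hΨB, (hc Ψ _).1 h]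

theorem md1_nonempty (Ψ : Fin 3) : (md1 Ψ).Nonempty := by
  fin_cases Ψ <;> simp [md1]

theorem union_minSet_compl_eq_univ {r : Fin 2 → Fin 2 → Prop} (hr : ∀ a, r a a)
    {S A : Set (Fin 2)} (hS : S.Nonempty) (hSA : S ⊆ A) (hA : A ≠ univ) :
    S ∪ minSet r Aᶜ = univ := by
  obtain ⟨x, hx⟩ := hS
  obtain ⟨y, hy⟩ := ne_univ_iff_exists_notMem A |>.mp hA
  have hxy : x ≠ y := fun h => hy (h ▸ hSA hx)
  have hxy_all (z : Fin 2) : z = x ∨ z = y := by omega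
  have hcompl : Aᶜ = {y} := eq_singleton_iff_unique_mem.mpr
    ⟨hy, fun z hz => (hxy_all z).resolve_left fun h => hz (h ▸ hSA hx)⟩
  refine eq_univ_of_forall fun z => (hxy_all z).imp (fun hz : z = x => hz ▸ hx) fun hz => ?_
  rw [hcompl, hz]
  exact ⟨rfl, fun z' hz' => (mem_singleton_iff.mp hz') ▸ hr y⟩

theorem md1_div1 (Ψ : Fin 3) (A : Set (Fin 2)) :
    (¬ md1 Ψ ⊆ A → md1 (div1 Ψ A) = md1 Ψ) ∧
      (md1 Ψ ⊆ A → md1 (div1 Ψ A) = md1 Ψ ∪ minSet (fun x y : Fin 2 => x ≤ y) Aᶜ) := by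
  refine ⟨fun h => by simp [div1, h], fun h => ?_⟩
  by_cases hA : A = univ
  · simp [div1, hA, minSet]
  · rw [div1, if_pos ⟨h, hA⟩, union_minSet_compl_eq_univ le_refl (md1_nonempty Ψ) h hA]
    rfl

/-- `div1` is a linear contraction operator for `E¹`, witnessed
by the linear order `≪` on `Ω₁` with `ω₁ ≪ ω₂` (i.e. `≤` on `Fin 2`). -/
theorem div1_linearContraction :
    IsContraction md1 div1 ∧
      IsLinRel (fun x y : Fin 2 => x ≤ y) ∧
      ∀ (Ψ : Fin 3) (A : Set (Fin 2)),
        (¬ md1 Ψ ⊆ A → md1 (div1 Ψ A) = md1 Ψ) ∧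
        (md1 Ψ ⊆ A →
          md1 (div1 Ψ A) = md1 Ψ ∪ minSet (fun x y : Fin 2 => x ≤ y) Aᶜ) :=
  ⟨isContraction_of_eq_union_minSet isLinRel_le md1_div1, isLinRel_le, md1_div1⟩
end

section
/- Consider the epistemic space E² = ⟨𝓔₂, mod⟩. Let ≪₁ be the linear order ω₁ ≪₁ ω₃ ≪₁ ω₂ ≪₁ ω₄ on Ω₂ and ≪₂ the linear order ω₁ ≪₂ ω₂ ≪₂ ω₃ ≪₂ ω₄ on Ω₂. Define the belief change operator ★ for E² by: Ψᵢ ★ A = Ψ_⊥ if A = ∅; Ψᵢ ★ A = Ψᵢ if ωᵢ ∈ A; otherwise Ψᵢ ★ A = Ψⱼ where ωⱼ is the ≪₁-least element of A (for i = 1, 2, 3, 4); and Ψ_⊥ ★ A = Ψ_⊥ if A = ∅, otherwise Ψ_⊥ ★ A = Ψⱼ where ωⱼ is the ≪₂-least element of A. Then ★ is a maxichoice revision operator for E² (in particular, ★ is an AGM revision operator for E²). -/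
open Set

/-- The epistemic space `E²` over `Ω₂ = Fin 4` (worlds `ω₁, ω₂, ω₃, ω₄`):
five states `Ψ₁, Ψ₂, Ψ₃, Ψ₄, Ψ_⊥` with `mod Ψᵢ = {ωᵢ}` and `mod Ψ_⊥ = ∅`. -/
def md2 : Fin 5 → Set (Fin 4) := ![{0}, {1}, {2}, {3}, ∅]

/-- The linear order `≪₁` on `Ω₂`: `ω₁ ≪₁ ω₃ ≪₁ ω₂ ≪₁ ω₄`. -/
def ll1 (x y : Fin 4) : Prop := (![0, 2, 1, 3] : Fin 4 → Fin 4) x ≤ ![0, 2, 1, 3] y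

/-- The linear order `≪₂` on `Ω₂`: `ω₁ ≪₂ ω₂ ≪₂ ω₃ ≪₂ ω₄`. -/
def ll2 (x y : Fin 4) : Prop := x ≤ y

/-- The order assigned to each state: `ll1` for `Ψᵢ`, `ll2` for `Ψ_⊥`. -/
def rr : Fin 5 → (Fin 4 → Fin 4 → Prop) := Fin.lastCases ll2 (fun _ => ll1)

lemma rr_cast (i : Fin 4) : rr i.castSucc = ll1 := by
  simp [rr]

lemma rr_last : rr (Fin.last 4) = ll2 := by
  exact Fin.lastCases_last

lemma linrel_ll1 : IsLinRel ll1 := by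
  unfold IsLinRel ll1; refine ⟨?_, ?_, ?_⟩ <;> decide

lemma linrel_ll2 : IsLinRel ll2 := by
  unfold IsLinRel ll2; refine ⟨?_, ?_, ?_⟩ <;> decide

lemma rr_linrel (Ψ : Fin 5) : IsLinRel (rr Ψ) := by
  induction Ψ using Fin.lastCases with
  | last => rw [rr_last]; exact linrel_ll2
  | cast i => rw [rr_cast]; exact linrel_ll1

lemma exists_min (f : Fin 4 → Fin 4) (A : Set (Fin 4)) (hA : A ≠ ∅) :
    ∃ j, j ∈ minSet (fun x y => f x ≤ f y) A := by
  obtain ⟨a, ha, hmin⟩ :=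
    Set.exists_min_image A f (Set.toFinite A) (Set.nonempty_iff_ne_empty.mpr hA)
  exact ⟨a, ha, hmin⟩

lemma rr_exists_min (Ψ : Fin 5) (A : Set (Fin 4)) (hA : A ≠ ∅) :
    ∃ j, j ∈ minSet (rr Ψ) A := by
  induction Ψ using Fin.lastCases with
  | last => rw [rr_last]; exact exists_min id A hA
  | cast i => rw [rr_cast]; exact exists_min ![0, 2, 1, 3] A hA

lemma minSet_subset_s17 (r : Fin 4 → Fin 4 → Prop) (A : Set (Fin 4)) : minSet r A ⊆ A :=
  fun _ h => h.1

lemma minSet_empty (r : Fin 4 → Fin 4 → Prop) : minSet r ∅ = ∅ := by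
  ext ω; simp [minSet]

lemma minSet_eq_singleton {r : Fin 4 → Fin 4 → Prop}
    (hanti : ∀ a b, r a b → r b a → a = b) {A : Set (Fin 4)} {j : Fin 4}
    (hj : j ∈ minSet r A) : minSet r A = {j} := by
  ext ω
  constructor
  · rintro ⟨hωA, hmin⟩
    exact hanti _ _ (hmin j hj.1) (hj.2 ω hωA)
  · rintro rfl; exact hj

lemma minSet_inter_subset (r : Fin 4 → Fin 4 → Prop) (A B : Set (Fin 4)) :
    minSet r A ∩ B ⊆ minSet r (A ∩ B) := by
  rintro ω ⟨⟨hωA, hmin⟩, hωB⟩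
  exact ⟨⟨hωA, hωB⟩, fun ω' hω' => hmin ω' hω'.1⟩

lemma minSet_inter_subset' {r : Fin 4 → Fin 4 → Prop}
    (hanti : ∀ a b, r a b → r b a → a = b) {A B : Set (Fin 4)}
    (h : minSet r A ∩ B ≠ ∅) : minSet r (A ∩ B) ⊆ minSet r A ∩ B := by
  obtain ⟨ω0, hω0⟩ := Set.nonempty_iff_ne_empty.mpr h
  rintro ω ⟨⟨hωA, hωB⟩, hmin⟩
  have h1 : r ω ω0 := hmin ω0 ⟨hω0.1.1, hω0.2⟩
  have h2 : r ω0 ω := hω0.1.2 ω hωA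
  have : ω = ω0 := hanti _ _ h1 h2
  rw [this]; exact hω0

lemma md2_cast (i : Fin 4) : md2 i.castSucc = {i} := by
  fin_cases i <;> rfl

lemma md2_last : md2 (Fin.last 4) = ∅ := rfl

lemma md2_four : md2 4 = ∅ := rfl

/-- The operator `★` on `E²` defined by: `Ψᵢ ★ A = Ψ_⊥` if
`A = ∅`; `Ψᵢ ★ A = Ψᵢ` if `ωᵢ ∈ A`; otherwise `Ψᵢ ★ A = Ψⱼ` for the
`≪₁`-least element `ωⱼ` of `A`; and `Ψ_⊥ ★ A = Ψ_⊥` if `A = ∅`, otherwise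
`Ψ_⊥ ★ A = Ψⱼ` for the `≪₂`-least element `ωⱼ` of `A` — is a maxichoice
revision operator (in particular an AGM revision operator) for `E²`. -/
theorem E2_star_maxichoiceRevision (star : Fin 5 → Set (Fin 4) → Fin 5)
    (hstates : ∀ (i : Fin 4) (A : Set (Fin 4)),
      (A = ∅ → star i.castSucc A = 4) ∧
      (i ∈ A → star i.castSucc A = i.castSucc) ∧
      (A ≠ ∅ → i ∉ A →
        ∀ j : Fin 4, j ∈ minSet ll1 A → star i.castSucc A = j.castSucc))
    (hbot : ∀ A : Set (Fin 4),
      (A = ∅ → star 4 A = 4) ∧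
      (A ≠ ∅ → ∀ j : Fin 4, j ∈ minSet ll2 A → star 4 A = j.castSucc)) :
    IsMaxichoiceRevision md2 star ∧ IsRevision md2 star := by
  have h4 : (4 : Fin 5) = Fin.last 4 := rfl
  -- The key behavior lemma.
  have L : ∀ (Ψ : Fin 5) (A : Set (Fin 4)),
      (md2 Ψ ∩ A ≠ ∅ → md2 (star Ψ A) = md2 Ψ ∩ A) ∧
      (md2 Ψ ∩ A = ∅ → md2 (star Ψ A) = minSet (rr Ψ) A) := by
    intro Ψ A
    induction Ψ using Fin.lastCases with
    | last =>
      constructor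
      · intro h; exact absurd (by rw [md2_last, Set.empty_inter]) h
      · intro _
        by_cases hA : A = ∅
        · subst hA
          rw [← h4, (hbot ∅).1 rfl, md2_four, minSet_empty]
        · obtain ⟨j, hj⟩ := rr_exists_min (Fin.last 4) A hA
          have hj2 : j ∈ minSet ll2 A := by rwa [rr_last] at hj
          rw [minSet_eq_singleton (rr_linrel (Fin.last 4)).2.1 hj, ← h4,
            (hbot A).2 hA j hj2, md2_cast]
    | cast i =>
      rw [md2_cast]
      constructor
      · intro h
        have hiA : i ∈ A := by
          obtain ⟨ω, hω⟩ := Set.nonempty_iff_ne_empty.mpr h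
          rcases hω with ⟨hω1, hω2⟩
          rw [Set.mem_singleton_iff] at hω1
          rwa [← hω1]
        rw [(hstates i A).2.1 hiA, md2_cast]
        exact (Set.inter_eq_left.mpr (Set.singleton_subset_iff.mpr hiA)).symm
      · intro h
        have hiA : i ∉ A := by
          intro hi
          have : i ∈ ({i} : Set (Fin 4)) ∩ A := ⟨rfl, hi⟩
          rw [h] at this; exact this
        by_cases hA : A = ∅
        · subst hA
          rw [(hstates i ∅).1 rfl, md2_four, minSet_empty]
        · obtain ⟨j, hj⟩ := rr_exists_min i.castSucc A hA
          have hj1 : j ∈ minSet ll1 A := by rwa [rr_cast] at hj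
          rw [(hstates i A).2.2 hA hiA j hj1, md2_cast,
            minSet_eq_singleton (rr_linrel i.castSucc).2.1 hj]
  have hrev : IsRevision md2 star := by
    intro Ψ A B
    refine ⟨?_, (L Ψ A).1, ?_, ?_, ?_⟩
    · by_cases h : md2 Ψ ∩ A = ∅
      · rw [(L Ψ A).2 h]; exact minSet_subset_s17 _ _
      · rw [(L Ψ A).1 h]; exact Set.inter_subset_right
    · intro hA
      by_cases h : md2 Ψ ∩ A = ∅
      · rw [(L Ψ A).2 h]
        obtain ⟨j, hj⟩ := rr_exists_min Ψ A hA
        exact Set.nonempty_iff_ne_empty.mp ⟨j, hj⟩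
      · rw [(L Ψ A).1 h]; exact h
    · by_cases h : md2 Ψ ∩ A = ∅
      · have hAB : md2 Ψ ∩ (A ∩ B) = ∅ := by
          apply Set.eq_empty_of_subset_empty
          rw [← h]; exact Set.inter_subset_inter_right _ Set.inter_subset_left
        rw [(L Ψ A).2 h, (L Ψ (A ∩ B)).2 hAB]
        exact minSet_inter_subset _ _ _
      · rw [(L Ψ A).1 h]
        by_cases h2 : md2 Ψ ∩ (A ∩ B) = ∅
        · rw [Set.inter_assoc, h2]; exact Set.empty_subset _
        · rw [(L Ψ (A ∩ B)).1 h2, Set.inter_assoc]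
    · intro hne
      by_cases h : md2 Ψ ∩ A = ∅
      · have hAB : md2 Ψ ∩ (A ∩ B) = ∅ := by
          apply Set.eq_empty_of_subset_empty
          rw [← h]; exact Set.inter_subset_inter_right _ Set.inter_subset_left
        rw [(L Ψ A).2 h] at hne ⊢
        rw [(L Ψ (A ∩ B)).2 hAB]
        exact minSet_inter_subset' (rr_linrel Ψ).2.1 hne
      · rw [(L Ψ A).1 h] at hne ⊢
        have h2 : md2 Ψ ∩ (A ∩ B) ≠ ∅ := by rwa [← Set.inter_assoc]
        rw [(L Ψ (A ∩ B)).1 h2, Set.inter_assoc]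
  refine ⟨⟨hrev, ?_⟩, hrev⟩
  intro Ψ
  exact ⟨rr Ψ, rr_linrel Ψ, fun A => L Ψ A⟩
end
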